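/- arXiv:2406.16095 — 5 statements merged into one kernel-verified Lean document; each statement's English description precedes it below -/
import Mathlib

section
/- Let H be a nontrivial complex Hilbert space and A_1, ..., A_N bounded self-adjoint operators on H which pairwise anticommute and satisfy A_x² = I. Then for any real coefficients c_1, ..., c_N, the operator norm satisfies ‖Σ_x c_x A_x‖ = sqrt(Σ_x c_x²). In particular, for any sign vector ε ∈ {±1}^N, ‖Σ_x ε_x A_x‖ = √N. -/
set_option maxHeartbeats 1000000
set_option synthInstance.maxHeartbeats 400000

theorem stmt2_aux {H : Type*} [NormedAddCommGroup H] [InnerProductSpace ℂ H]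
    [CompleteSpace H] [Nontrivial H] (N : ℕ)
    (A : Fin N → H →L[ℂ] H)
    (hsa : ∀ x, IsSelfAdjoint (A x))
    (hsq : ∀ x, A x * A x = 1)
    (hanti : ∀ x y, x ≠ y → A x * A y + A y * A x = 0)
    (c : Fin N → ℝ) :
    ‖∑ x, c x • A x‖ = Real.sqrt (∑ x, (c x) ^ 2) := by
  set S : H →L[ℂ] H := ∑ x, c x • A x with hS
  have hsaS : IsSelfAdjoint S := by
    rw [IsSelfAdjoint, hS, star_sum]
    exact Finset.sum_congr rfl fun x _ => by
      rw [star_smul, star_trivial, (hsa x).star_eq]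
  have key : S * S = (∑ x, (c x)^2) • (1 : H →L[ℂ] H) := by
    have hexp : S * S = ∑ x, ∑ y, (c x * c y) • (A x * A y) := by
      rw [hS, Finset.sum_mul_sum]
      exact Finset.sum_congr rfl fun x _ => Finset.sum_congr rfl fun y _ => by
        rw [smul_mul_smul_comm]
    have hexp' : S * S = ∑ x, ∑ y, (c x * c y) • (A y * A x) := by
      rw [hexp, Finset.sum_comm]
      exact Finset.sum_congr rfl fun x _ => Finset.sum_congr rfl fun y _ => by
        rw [mul_comm (c y) (c x)]
    have h2 : (2:ℝ) • (S * S) = (2:ℝ) • ((∑ x, (c x)^2) • (1 : H →L[ℂ] H)) := by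
      calc (2:ℝ) • (S * S) = ∑ x, ∑ y, (c x * c y) • (A x * A y + A y * A x) := by
            rw [two_smul]
            nth_rewrite 1 [hexp]
            nth_rewrite 1 [hexp']
            rw [← Finset.sum_add_distrib]
            refine Finset.sum_congr rfl fun x _ => ?_
            rw [← Finset.sum_add_distrib]
            exact Finset.sum_congr rfl fun y _ => (smul_add _ _ _).symm
        _ = ∑ x, (2 * (c x)^2) • (1 : H →L[ℂ] H) := by
            refine Finset.sum_congr rfl fun x _ => ?_
            rw [Finset.sum_eq_single x]
            · rw [hsq x, show (1:H→L[ℂ]H) + 1 = (2:ℝ) • 1 by rw [two_smul],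
                smul_smul]
              ring_nf
            · intro y _ hy
              rw [hanti x y (Ne.symm hy), smul_zero]
            · intro h; exact absurd (Finset.mem_univ x) h
        _ = (2:ℝ) • ((∑ x, (c x)^2) • (1 : H →L[ℂ] H)) := by
            rw [Finset.sum_smul, Finset.smul_sum]
            refine Finset.sum_congr rfl fun x _ => ?_
            rw [smul_smul]
    exact smul_right_injective _ (two_ne_zero) h2
  have hnorm2 : ‖S‖ * ‖S‖ = ∑ x, (c x)^2 := by
    rw [← CStarRing.norm_star_mul_self, hsaS.star_eq, key, norm_smul, norm_one, mul_one,
      Real.norm_eq_abs, abs_of_nonneg (Finset.sum_nonneg fun x _ => sq_nonneg _)]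
  rw [← hnorm2, Real.sqrt_mul_self (norm_nonneg S)]

/-- For bounded self-adjoint pairwise anticommuting involutions
`A x` on a nontrivial complex Hilbert space, `‖∑ x, c x • A x‖ = √(∑ x, (c x)²)`;
in particular for sign vectors `ε ∈ {±1}^N`, `‖∑ x, ε x • A x‖ = √N`. -/
theorem stmt2 {H : Type*} [NormedAddCommGroup H] [InnerProductSpace ℂ H]
    [CompleteSpace H] [Nontrivial H] (N : ℕ)
    (A : Fin N → H →L[ℂ] H)
    (hsa : ∀ x, IsSelfAdjoint (A x))
    (hsq : ∀ x, A x * A x = 1)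
    (hanti : ∀ x y, x ≠ y → A x * A y + A y * A x = 0) :
    (∀ c : Fin N → ℝ,
        ‖∑ x, c x • A x‖ = Real.sqrt (∑ x, (c x) ^ 2)) ∧
    (∀ ε : Fin N → ℝ, (∀ x, ε x = 1 ∨ ε x = -1) →
        ‖∑ x, ε x • A x‖ = Real.sqrt N) := by
  refine ⟨stmt2_aux N A hsa hsq hanti, fun ε hε => ?_⟩
  rw [stmt2_aux N A hsa hsq hanti ε]
  congr 1
  have : ∀ x, (ε x) ^ 2 = 1 := fun x => by rcases hε x with h | h <;> rw [h] <;> ring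
  simp [this]
end

section
/- Let 0 ≤ η ≤ 1/√2. Define the four 2×2 matrices G_{ab} = (1/4)(I + η(a σ_1 + b σ_3)) for a, b ∈ {±1}. Then each G_{ab} is positive semidefinite, Σ_{a,b} G_{ab} = I, and the marginals satisfy Σ_b G_{ab} = (1/2)(I + η a σ_1) and Σ_a G_{ab} = (1/2)(I + η b σ_3). Hence the two unsharp qubit observables {(1/2)(I ± η σ_1)} and {(1/2)(I ± η σ_3)} are jointly measurable whenever η ≤ 1/√2. -/
open Matrix ComplexOrder

/-- The Pauli matrices `σ₁, σ₂, σ₃`. -/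
noncomputable def pauli : Fin 3 → Matrix (Fin 2) (Fin 2) ℂ
  | 0 => !![0, 1; 1, 0]
  | 1 => !![0, -Complex.I; Complex.I, 0]
  | 2 => !![1, 0; 0, -1]

/-- The sign `±1` attached to a Boolean outcome. -/
def sgn (t : Bool) : ℂ := if t then 1 else -1

lemma quad (u v p q r s : ℝ) (h : u^2+v^2 ≤ 1) :
    0 ≤ (1+v)*(p^2+q^2) + (1-v)*(r^2+s^2) + 2*u*(p*r+q*s) := by
  nlinarith [sq_nonneg (u*p + (1-v)*r), sq_nonneg (u*r + (1+v)*p),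
    sq_nonneg (u*q + (1-v)*s), sq_nonneg (u*s + (1+v)*q),
    sq_nonneg (p+r), sq_nonneg (p-r), sq_nonneg (q+s), sq_nonneg (q-s), sq_nonneg u, sq_nonneg v]

lemma psd2 (u v : ℝ) (h : u^2+v^2 ≤ 1) :
    ((1/4:ℂ) • !![1+(v:ℂ), (u:ℂ); (u:ℂ), 1-(v:ℂ)]).PosSemidef := by
  rw [Matrix.posSemidef_iff_dotProduct_mulVec]
  constructor
  · ext i j
    fin_cases i <;> fin_cases j <;>
      simp [Matrix.conjTranspose_apply, Complex.ext_iff]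
  · intro x
    have hq := quad u v (x 0).re (x 0).im (x 1).re (x 1).im h
    simp only [Matrix.mulVec, dotProduct, Fin.sum_univ_two, Matrix.smul_apply,
      Matrix.cons_val', Matrix.cons_val_zero, Matrix.cons_val_one, Matrix.head_cons,
      Matrix.head_fin_const, Matrix.empty_val', Matrix.cons_val_fin_one, Pi.star_apply]
    rw [Complex.le_def]
    constructor
    · simp [Complex.add_re, Complex.mul_re, Complex.mul_im, Complex.add_im]
      nlinarith [hq]
    · simp [Complex.add_im, Complex.mul_re, Complex.mul_im]
      ring

/-- For `0 ≤ η ≤ 1/√2`, the four matrices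
`G_{ab} = (1/4)(I + η(a σ₁ + b σ₃))`, `a, b ∈ {±1}`, are positive semidefinite,
sum to the identity, and have marginals `(1/2)(I + η a σ₁)` and `(1/2)(I + η b σ₃)`;
hence the unsharp observables `{(1/2)(I ± η σ₁)}` and `{(1/2)(I ± η σ₃)}` are jointly
measurable. -/
theorem stmt6 (η : ℝ) (h0 : 0 ≤ η) (h1 : η ≤ 1 / Real.sqrt 2)
    (G : Bool → Bool → Matrix (Fin 2) (Fin 2) ℂ)
    (hG : ∀ a b, G a b =
      (1 / 4 : ℂ) • (1 + (η : ℂ) • (sgn a • pauli 0 + sgn b • pauli 2))) :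
    (∀ a b, (G a b).PosSemidef) ∧
    (∑ a, ∑ b, G a b) = 1 ∧
    (∀ a, (∑ b, G a b) = (1 / 2 : ℂ) • (1 + (η : ℂ) • sgn a • pauli 0)) ∧
    (∀ b, (∑ a, G a b) = (1 / 2 : ℂ) • (1 + (η : ℂ) • sgn b • pauli 2)) := by

  have hsq : η ^ 2 ≤ 1 / 2 := by
    have h2 : (0:ℝ) < Real.sqrt 2 := Real.sqrt_pos.2 (by norm_num)
    have := mul_self_le_mul_self h0 h1
    calc η ^ 2 = η * η := sq η
      _ ≤ (1 / Real.sqrt 2) * (1 / Real.sqrt 2) := this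
      _ = 1 / 2 := by
          rw [div_mul_div_comm, Real.mul_self_sqrt (by norm_num : (0:ℝ) ≤ 2)]; norm_num
  refine ⟨?_, ?_, ?_, ?_⟩
  · intro a b
    have key : ∀ (εa εb : ℝ), εa^2 = 1 → εb^2 = 1 →
        G a b = (1/4:ℂ) • !![1+((εb*η : ℝ):ℂ), ((εa*η : ℝ):ℂ); ((εa*η : ℝ):ℂ), 1-((εb*η : ℝ):ℂ)] →
        (G a b).PosSemidef := by
      intro εa εb ha hb hEq
      rw [hEq]
      apply psd2
      nlinarith [hsq, sq_nonneg εa, sq_nonneg εb]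
    cases a <;> cases b
    · exact key (-1) (-1) (by ring) (by ring) (by
        rw [hG]; ext i j; fin_cases i <;> fin_cases j <;>
          simp [pauli, sgn] <;> push_cast <;> ring)
    · exact key (-1) 1 (by ring) (by ring) (by
        rw [hG]; ext i j; fin_cases i <;> fin_cases j <;>
          simp [pauli, sgn] <;> push_cast <;> ring)
    · exact key 1 (-1) (by ring) (by ring) (by
        rw [hG]; ext i j; fin_cases i <;> fin_cases j <;>
          simp [pauli, sgn] <;> push_cast <;> ring)
    · exact key 1 1 (by ring) (by ring) (by
        rw [hG]; ext i j; fin_cases i <;> fin_cases j <;>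
          simp [pauli, sgn] <;> push_cast <;> ring)
  · have st : sgn true = 1 := rfl
    have sf : sgn false = -1 := rfl
    simp only [Fintype.sum_bool, hG, st, sf]
    module
  · intro a
    have st : sgn true = 1 := rfl
    have sf : sgn false = -1 := rfl
    cases a <;> simp only [Fintype.sum_bool, hG, st, sf] <;> module
  · intro b
    have st : sgn true = 1 := rfl
    have sf : sgn false = -1 := rfl
    cases b <;> simp only [Fintype.sum_bool, hG, st, sf] <;> module
end

section
/- Let 0 ≤ η ≤ 1/√3. Define the eight matrices G_{abc} = (1/8)(I + η(a σ_1 + b σ_2 + c σ_3)) for a, b, c ∈ {±1}. Then {G_{abc}} is a POVM (each G_{abc} ⪰ 0 and they sum to I), and its three pairwise marginals recover the unsharp Pauli measurements: Σ_{b,c} G_{abc} = (1/2)(I + η a σ_1), and similarly for σ_2 and σ_3. Hence the three unsharp Pauli observables with unsharpness η ≤ 1/√3 are triplewise jointly measurable. -/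
open Matrix ComplexOrder

set_option maxHeartbeats 2000000 in
lemma quad_aux (η ea eb ec p q r s : ℝ) (h0 : 0 ≤ η) (h3 : 3*η^2 ≤ 1)
    (ha : ea^2 = 1) (hb : eb^2 = 1) (hc : ec^2 = 1) :
    0 ≤
    p * (8⁻¹ * (1 + η * ec) * p + (8⁻¹ * (η * ea) * r + 8⁻¹ * (η * eb) * s)) +
        q * (8⁻¹ * (1 + η * ec) * q + (8⁻¹ * (η * ea) * s + -(8⁻¹ * (η * eb) * r))) +
      (r * (8⁻¹ * (η * ea) * p - 8⁻¹ * (η * eb) * q + 8⁻¹ * (1 + -(η * ec)) * r) +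
        s * (8⁻¹ * (η * ea) * q + 8⁻¹ * (η * eb) * p + 8⁻¹ * (1 + -(η * ec)) * s)) := by
  by_contra hcon0
  push_neg at hcon0
  have hcon := hcon0
  set S := p^2+q^2+r^2+s^2 with hS
  set T := ec*(p^2+q^2-r^2-s^2) + 2*ea*(p*r+q*s) + 2*eb*(p*s-q*r) with hT
  have hS0 : 0 ≤ S := by positivity
  have key : ∀ x y z : ℝ, (x+y+z)^2 ≤ 3*(x^2+y^2+z^2) := fun x y z => by
    nlinarith [sq_nonneg (x-y), sq_nonneg (y-z), sq_nonneg (x-z)]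
  have hTS : T^2 ≤ 3*S^2 := by
    calc T^2 ≤ 3*((ec*(p^2+q^2-r^2-s^2))^2 + (2*ea*(p*r+q*s))^2 + (2*eb*(p*s-q*r))^2) := by
          rw [hT]; have := key (ec*(p^2+q^2-r^2-s^2)) (2*ea*(p*r+q*s)) (2*eb*(p*s-q*r))
          nlinarith [this]
      _ = 3*S^2 := by
          rw [hS]
          linear_combination 3*(p^2+q^2-r^2-s^2)^2*hc + 12*(p*r+q*s)^2*ha + 12*(p*s-q*r)^2*hb
  have hcon' : S + η*T < 0 := by rw [hS, hT]; nlinarith [hcon]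
  have hpos : 0 < S - η*T := by nlinarith
  have hprod : 0 < (-(S+η*T)) * (S - η*T) := mul_pos (by linarith) hpos
  have h5 : η^2*T^2 ≤ η^2*(3*S^2) := mul_le_mul_of_nonneg_left hTS (sq_nonneg η)
  have h6 : η^2*(3*S^2) ≤ S^2 := by
    nlinarith [mul_nonneg (by linarith : (0:ℝ) ≤ 1-3*η^2) (sq_nonneg S)]
  nlinarith [hprod, h5, h6]

set_option maxHeartbeats 2000000 in
lemma psd_aux (η ea eb ec : ℝ) (h0 : 0 ≤ η) (h3 : 3*η^2 ≤ 1)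
    (ha : ea^2 = 1) (hb : eb^2 = 1) (hc : ec^2 = 1) :
    ((1/8 : ℂ) •
      (1 + (η:ℂ) • ((ea:ℂ) • pauli 0 + (eb:ℂ) • pauli 1 + (ec:ℂ) • pauli 2))).PosSemidef := by
  rw [posSemidef_iff_dotProduct_mulVec]
  constructor
  · ext i j
    fin_cases i <;> fin_cases j <;>
      simp [pauli, Matrix.conjTranspose_apply, Matrix.one_apply, Complex.ext_iff] <;> ring
  · intro x
    have key : ∀ z : ℂ, 0 ≤ z.re → z.im = 0 → 0 ≤ z := by
      intro z h1 h2
      rw [Complex.le_def]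
      simp [h1, h2]
    apply key
    · simp [dotProduct, mulVec, Fin.sum_univ_two, pauli, Matrix.one_apply, Complex.add_re,
        Complex.mul_re, Complex.mul_im]
      exact quad_aux η ea eb ec (x 0).re (x 0).im (x 1).re (x 1).im h0 h3 ha hb hc
    · simp [dotProduct, mulVec, Fin.sum_univ_two, pauli, Matrix.one_apply, Complex.add_im,
        Complex.mul_re, Complex.mul_im]
      ring

/-- For `0 ≤ η ≤ 1/√3`, the eight matrices
`G_{abc} = (1/8)(I + η(a σ₁ + b σ₂ + c σ₃))` form a POVM whose three pairwise
marginals are the unsharp Pauli measurements `(1/2)(I + η a σᵢ)`; hence the three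
unsharp Pauli observables with unsharpness `η ≤ 1/√3` are triplewise jointly
measurable. -/
theorem stmt7 (η : ℝ) (h0 : 0 ≤ η) (h1 : η ≤ 1 / Real.sqrt 3)
    (G : Bool → Bool → Bool → Matrix (Fin 2) (Fin 2) ℂ)
    (hG : ∀ a b c, G a b c =
      (1 / 8 : ℂ) •
        (1 + (η : ℂ) • (sgn a • pauli 0 + sgn b • pauli 1 + sgn c • pauli 2))) :
    (∀ a b c, (G a b c).PosSemidef) ∧
    (∑ a, ∑ b, ∑ c, G a b c) = 1 ∧
    (∀ a, (∑ b, ∑ c, G a b c) = (1 / 2 : ℂ) • (1 + (η : ℂ) • sgn a • pauli 0)) ∧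
    (∀ b, (∑ a, ∑ c, G a b c) = (1 / 2 : ℂ) • (1 + (η : ℂ) • sgn b • pauli 1)) ∧
    (∀ c, (∑ a, ∑ b, G a b c) = (1 / 2 : ℂ) • (1 + (η : ℂ) • sgn c • pauli 2)) := by
  have h3 : 3 * η^2 ≤ 1 := by
    have hs : (0:ℝ) < Real.sqrt 3 := Real.sqrt_pos.2 (by norm_num)
    have h2 : η^2 ≤ (1 / Real.sqrt 3)^2 := by
      apply pow_le_pow_left₀ h0 h1
    have hsq : (Real.sqrt 3)^2 = 3 := Real.sq_sqrt (by norm_num)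
    rw [div_pow, one_pow, hsq] at h2
    rw [le_div_iff₀ (by norm_num)] at h2
    linarith
  refine ⟨?_, ?_, ?_, ?_, ?_⟩
  · intro a b c
    rw [hG]
    have hsg : ∀ t : Bool, sgn t = (((if t then 1 else -1 : ℝ)):ℂ) := by
      intro t; cases t <;> simp [sgn]
    have hsq : ∀ t : Bool, ((if t then 1 else -1 : ℝ))^2 = 1 := by
      intro t; cases t <;> norm_num
    rw [hsg a, hsg b, hsg c]
    exact psd_aux η _ _ _ h0 h3 (hsq a) (hsq b) (hsq c)
  · simp only [hG, Fintype.sum_bool, sgn]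
    norm_num
    module
  · intro a
    simp only [hG, Fintype.sum_bool, sgn]
    cases a <;> norm_num <;> module
  · intro b
    simp only [hG, Fintype.sum_bool, sgn]
    cases b <;> norm_num <;> module
  · intro c
    simp only [hG, Fintype.sum_bool, sgn]
    cases c <;> norm_num <;> module
end

section
/- Let H_A, H_B be finite-dimensional complex Hilbert spaces, A_1, ..., A_N self-adjoint operators on H_A, B_1, ..., B_{2^{N-1}} self-adjoint operators on H_B with ‖B_y‖ ≤ 1, and ρ a density operator on H_A ⊗ H_B. Then Σ_{y} |Tr(ρ · ((Σ_x ε_{y,x} A_x) ⊗ B_y))| ≤ Σ_y ‖Σ_x ε_{y,x} A_x‖, where ε_{y,·} ranges over the 2^{N-1} sign vectors with first entry +1. If moreover the A_x pairwise anticommute and A_x² = I, the right-hand side equals 2^{N-1}·√N. -/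
open Matrix ComplexOrder
open scoped Kronecker

noncomputable section Aux
variable {ι : Type*} [Fintype ι] [DecidableEq ι]

lemma sq_sum_mulVec_le (M : Matrix ι ι ℂ) (v : ι → ℂ) :
    ∑ i, ‖M.mulVec v i‖ ^ 2
      ≤ ‖Matrix.toEuclideanCLM (𝕜 := ℂ) M‖ ^ 2 * ∑ i, ‖v i‖ ^ 2 := by
  have h := (Matrix.toEuclideanCLM (𝕜 := ℂ) M).le_opNorm ((WithLp.equiv 2 (ι → ℂ)).symm v)
  rw [WithLp.equiv_symm_apply, Matrix.toEuclideanCLM_toLp,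
    EuclideanSpace.norm_eq, EuclideanSpace.norm_eq] at h
  simp only [PiLp.toLp_apply] at h
  have h1 : (0:ℝ) ≤ ∑ i, ‖M.mulVec v i‖ ^ 2 := Finset.sum_nonneg fun _ _ => sq_nonneg _
  have h2 : (0:ℝ) ≤ ∑ i, ‖v i‖ ^ 2 := Finset.sum_nonneg fun _ _ => sq_nonneg _
  calc ∑ i, ‖M.mulVec v i‖ ^ 2
      = (Real.sqrt (∑ i, ‖M.mulVec v i‖ ^ 2)) ^ 2 := (Real.sq_sqrt h1).symm
    _ ≤ (‖Matrix.toEuclideanCLM (𝕜 := ℂ) M‖ * Real.sqrt (∑ i, ‖v i‖ ^ 2)) ^ 2 := by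
        exact pow_le_pow_left₀ (Real.sqrt_nonneg _) h 2
    _ = _ := by rw [mul_pow, Real.sq_sqrt h2]

lemma abs_entry_le (Y : Matrix ι ι ℂ) (i j : ι) :
    ‖Y i j‖ ≤ ‖Matrix.toEuclideanCLM (𝕜 := ℂ) Y‖ := by
  have h := sq_sum_mulVec_le Y (Pi.single j 1)
  have hs : ∑ k, ‖Pi.single (M := fun _ : ι => ℂ) j 1 k‖ ^ 2 = 1 := by
    simp [Pi.single_apply, apply_ite]
  rw [hs, mul_one] at h
  have h2 : ‖Y i j‖ ^ 2 ≤ ‖Matrix.toEuclideanCLM (𝕜 := ℂ) Y‖ ^ 2 := by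
    refine le_trans ?_ h
    have : ‖Y.mulVec (Pi.single j 1) i‖ ^ 2 = ‖Y i j‖ ^ 2 := by
      simp [Matrix.mulVec_single]
    rw [← this]
    exact Finset.single_le_sum (f := fun k => ‖Y.mulVec (Pi.single j 1) k‖ ^ 2)
      (fun _ _ => sq_nonneg _) (Finset.mem_univ i)
  have := Real.sqrt_le_sqrt h2
  rw [Real.sqrt_sq (norm_nonneg _), Real.sqrt_sq (norm_nonneg _)] at this
  exact this

variable {ι : Type*} [Fintype ι] [DecidableEq ι]


lemma norm_toCLM_unitary_le (U : Matrix ι ι ℂ) (hU : star U * U = 1) :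
    ‖Matrix.toEuclideanCLM (𝕜 := ℂ) U‖ ≤ 1 := by
  set u := Matrix.toEuclideanCLM (𝕜 := ℂ) U with hu
  have h1 : star u * u = 1 := by rw [hu, ← StarHomClass.map_star, ← _root_.map_mul, hU, _root_.map_one]
  have h2 : ‖u‖ * ‖u‖ = ‖star u * u‖ := CStarRing.norm_star_mul_self.symm
  rw [h1] at h2
  have h3 : ‖(1 : EuclideanSpace ℂ ι →L[ℂ] EuclideanSpace ℂ ι)‖ ≤ 1 := by
    rw [ContinuousLinearMap.one_def]; exact ContinuousLinearMap.norm_id_le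
  nlinarith [norm_nonneg u]

lemma abs_trace_mul_le (ρ X : Matrix ι ι ℂ) (hρ : ρ.PosSemidef) (hρtr : ρ.trace = 1) :
    ‖(ρ * X).trace‖ ≤ ‖Matrix.toEuclideanCLM (𝕜 := ℂ) X‖ := by
  have hH := hρ.1
  set U : Matrix ι ι ℂ := ↑(hH.eigenvectorUnitary) with hUdef
  set d : ι → ℝ := hH.eigenvalues with hddef
  have hU1 : U * star U = 1 := Matrix.mem_unitaryGroup_iff.mp (hH.eigenvectorUnitary).2
  have hU2 : star U * U = 1 := Matrix.mem_unitaryGroup_iff'.mp (hH.eigenvectorUnitary).2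
  have hspec : ρ = U * Matrix.diagonal (fun i => (d i : ℂ)) * star U := by
    exact hH.spectral_theorem
  set Y := star U * X * U with hY
  have htr : (ρ * X).trace = ∑ i, (d i : ℂ) * Y i i := by
    calc (ρ * X).trace
        = ((U * Matrix.diagonal (fun i => (d i:ℂ))) * (star U * X)).trace := by
          rw [← mul_assoc, ← hspec]
      _ = ((star U * X) * (U * Matrix.diagonal (fun i => (d i:ℂ)))).trace :=
          Matrix.trace_mul_comm _ _
      _ = ((star U * X * U) * Matrix.diagonal (fun i => (d i:ℂ))).trace := by
          rw [← mul_assoc]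
      _ = (Matrix.diagonal (fun i => (d i:ℂ)) * Y).trace := Matrix.trace_mul_comm _ _
      _ = ∑ i, (d i : ℂ) * Y i i := by
          simp [Matrix.trace, Matrix.diag, Matrix.diagonal_mul]
  have hd0 : ∀ i, 0 ≤ d i := fun i => hρ.eigenvalues_nonneg i
  have hsum : ∑ i, d i = 1 := by
    have h : ρ.trace = ∑ i, (d i : ℂ) := by
      rw [hspec, Matrix.trace_mul_cycle, hU2, one_mul, Matrix.trace_diagonal]
    rw [hρtr] at h
    exact_mod_cast h.symm
  have hYn : ‖Matrix.toEuclideanCLM (𝕜 := ℂ) Y‖ ≤ ‖Matrix.toEuclideanCLM (𝕜 := ℂ) X‖ := by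
    have heq : Matrix.toEuclideanCLM (𝕜 := ℂ) Y
        = Matrix.toEuclideanCLM (𝕜 := ℂ) (star U) * Matrix.toEuclideanCLM (𝕜 := ℂ) X
          * Matrix.toEuclideanCLM (𝕜 := ℂ) U := by rw [hY, _root_.map_mul, _root_.map_mul]
    rw [heq]
    have hu : ‖Matrix.toEuclideanCLM (𝕜 := ℂ) U‖ ≤ 1 := norm_toCLM_unitary_le U hU2
    have hsu : ‖Matrix.toEuclideanCLM (𝕜 := ℂ) (star U)‖ ≤ 1 :=
      norm_toCLM_unitary_le (star U) (by rw [star_star]; exact hU1)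
    have n1 := norm_mul_le (Matrix.toEuclideanCLM (𝕜 := ℂ) (star U) * Matrix.toEuclideanCLM (𝕜 := ℂ) X) (Matrix.toEuclideanCLM (𝕜 := ℂ) U)
    have n2 := norm_mul_le (Matrix.toEuclideanCLM (𝕜 := ℂ) (star U)) (Matrix.toEuclideanCLM (𝕜 := ℂ) X)
    nlinarith [norm_nonneg (Matrix.toEuclideanCLM (𝕜 := ℂ) X),
      norm_nonneg (Matrix.toEuclideanCLM (𝕜 := ℂ) U),
      norm_nonneg (Matrix.toEuclideanCLM (𝕜 := ℂ) (star U)),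
      norm_nonneg (Matrix.toEuclideanCLM (𝕜 := ℂ) (star U) * Matrix.toEuclideanCLM (𝕜 := ℂ) X)]
  rw [htr]
  calc ‖∑ i, (d i:ℂ) * Y i i‖
      ≤ ∑ i, ‖(d i:ℂ) * Y i i‖ := norm_sum_le _ _
    _ = ∑ i, d i * ‖Y i i‖ := by
        refine Finset.sum_congr rfl fun i _ => ?_
        rw [norm_mul, Complex.norm_real, Real.norm_eq_abs, abs_of_nonneg (hd0 i)]
    _ ≤ ∑ i, d i * ‖Matrix.toEuclideanCLM (𝕜 := ℂ) X‖ :=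
        Finset.sum_le_sum fun i _ =>
          mul_le_mul_of_nonneg_left (le_trans (abs_entry_le Y i i) hYn) (hd0 i)
    _ = ‖Matrix.toEuclideanCLM (𝕜 := ℂ) X‖ := by rw [← Finset.sum_mul, hsum, one_mul]

variable {ι : Type*} [Fintype ι] [DecidableEq ι]


lemma kron_norm_le {m n : ℕ} (M : Matrix (Fin m) (Fin m) ℂ) (B : Matrix (Fin n) (Fin n) ℂ) :
    ‖Matrix.toEuclideanCLM (𝕜 := ℂ) (M ⊗ₖ B)‖
      ≤ ‖Matrix.toEuclideanCLM (𝕜 := ℂ) M‖ * ‖Matrix.toEuclideanCLM (𝕜 := ℂ) B‖ := by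
  refine ContinuousLinearMap.opNorm_le_bound _
    (mul_nonneg (norm_nonneg _) (norm_nonneg _)) fun v => ?_
  set w : Fin m × Fin n → ℂ := WithLp.equiv 2 _ v with hw
  have hv : v = (WithLp.equiv 2 _).symm w := by simp [hw]
  rw [hv, WithLp.equiv_symm_apply, Matrix.toEuclideanCLM_toLp,
    EuclideanSpace.norm_eq, EuclideanSpace.norm_eq]
  simp only [PiLp.toLp_apply]
  set W : Fin m → Fin n → ℂ := fun k j => B.mulVec (fun l => w (k, l)) j with hW
  have key : ∀ i j, (M ⊗ₖ B).mulVec w (i, j) = M.mulVec (fun k => W k j) i := by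
    intro i j
    simp only [Matrix.mulVec, dotProduct, Matrix.kroneckerMap_apply, hW]
    rw [Fintype.sum_prod_type]
    refine Finset.sum_congr rfl fun k _ => ?_
    rw [Finset.mul_sum]
    exact Finset.sum_congr rfl fun l _ => by ring
  have hsq : ∑ p : Fin m × Fin n, ‖(M ⊗ₖ B).mulVec w p‖ ^ 2
      ≤ (‖Matrix.toEuclideanCLM (𝕜 := ℂ) M‖ * ‖Matrix.toEuclideanCLM (𝕜 := ℂ) B‖) ^ 2
        * ∑ p : Fin m × Fin n, ‖w p‖ ^ 2 := by
    calc ∑ p : Fin m × Fin n, ‖(M ⊗ₖ B).mulVec w p‖ ^ 2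
        = ∑ j, ∑ i, ‖M.mulVec (fun k => W k j) i‖ ^ 2 := by
          rw [Fintype.sum_prod_type, Finset.sum_comm]
          simp only [key]
      _ ≤ ∑ j : Fin n, ‖Matrix.toEuclideanCLM (𝕜 := ℂ) M‖ ^ 2 * ∑ k, ‖W k j‖ ^ 2 :=
          Finset.sum_le_sum fun j _ => sq_sum_mulVec_le M _
      _ = ‖Matrix.toEuclideanCLM (𝕜 := ℂ) M‖ ^ 2
            * ∑ k, ∑ j, ‖B.mulVec (fun l => w (k, l)) j‖ ^ 2 := by
          rw [← Finset.mul_sum, Finset.sum_comm]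
      _ ≤ ‖Matrix.toEuclideanCLM (𝕜 := ℂ) M‖ ^ 2
            * ∑ k : Fin m, ‖Matrix.toEuclideanCLM (𝕜 := ℂ) B‖ ^ 2 * ∑ l, ‖w (k, l)‖ ^ 2 :=
          mul_le_mul_of_nonneg_left
            (Finset.sum_le_sum fun k _ => sq_sum_mulVec_le B _) (sq_nonneg _)
      _ = _ := by
          rw [← Finset.mul_sum, ← mul_assoc, ← mul_pow, Fintype.sum_prod_type]
  have := Real.sqrt_le_sqrt hsq
  rwa [Real.sqrt_mul (sq_nonneg _),
    Real.sqrt_sq (mul_nonneg (norm_nonneg _) (norm_nonneg _))] at this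

lemma norm_sum_eq {N m : ℕ} (hm : 0 < m) (c : Fin N → ℝ) (hc : ∀ x, c x = 1 ∨ c x = -1)
    (A : Fin N → Matrix (Fin m) (Fin m) ℂ) (hA : ∀ x, (A x).IsHermitian)
    (hsq : ∀ x, A x * A x = 1) (hanti : ∀ x x', x ≠ x' → A x * A x' + A x' * A x = 0) :
    ‖Matrix.toEuclideanCLM (𝕜 := ℂ) (∑ x, (c x : ℂ) • A x)‖ = Real.sqrt N := by
  haveI : Nonempty (Fin m) := ⟨⟨0, hm⟩⟩
  set S := ∑ x, (c x : ℂ) • A x with hS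
  set g : Fin N → Fin N → Matrix (Fin m) (Fin m) ℂ :=
    fun x x' => ((c x : ℂ) * (c x' : ℂ)) • (A x * A x') with hg
  have hgneg : ∀ x x', x ≠ x' → g x' x = -(g x x') := by
    intro x x' hxx
    have h := hanti x x' hxx
    have h2 : A x' * A x = -(A x * A x') := by
      have := eq_neg_of_add_eq_zero_right h
      linear_combination (norm := noncomm_ring) this
    rw [hg]
    simp only [h2, smul_neg]
    rw [mul_comm ((c x' : ℂ))]
  have hgdiag : ∀ x, g x x = 1 := by
    intro x
    have hcc : (c x : ℂ) * (c x : ℂ) = 1 := by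
      rcases hc x with h | h <;> rw [h] <;> norm_num
    rw [hg]; simp only [hcc, hsq x, one_smul]
  have hSS : S * S = (N : ℂ) • 1 := by
    rw [hS, Finset.sum_mul_sum]
    have h1 : ∀ x x' : Fin N, ((c x : ℂ) • A x) * ((c x' : ℂ) • A x') = g x x' := by
      intro x x'; rw [hg, smul_mul_assoc, mul_smul_comm, smul_smul]
    have h2 : ∀ x x' : Fin N,
        g x x' = (if x' = x then g x x' else 0) + (if x' = x then 0 else g x x') := by
      intro x x'; split <;> simp
    calc ∑ x, ∑ x', ((c x : ℂ) • A x) * ((c x' : ℂ) • A x')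
        = ∑ x, ∑ x', ((if x' = x then g x x' else 0) + (if x' = x then 0 else g x x')) := by
          refine Finset.sum_congr rfl fun x _ => Finset.sum_congr rfl fun x' _ => ?_
          rw [h1]; exact h2 x x'
      _ = ∑ x, ((∑ x', if x' = x then g x x' else 0) + ∑ x', (if x' = x then 0 else g x x')) := by
          simp [Finset.sum_add_distrib]
      _ = (∑ x, g x x) + ∑ x, ∑ x', (if x' = x then 0 else g x x') := by
          rw [Finset.sum_add_distrib]
          congr 1
          refine Finset.sum_congr rfl fun x _ => ?_
          simp [Finset.sum_ite_eq' Finset.univ x (g x)]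
      _ = (N : ℂ) • 1 := by
          have hT : (∑ x, ∑ x', (if x' = x then 0 else g x x'))
              = -(∑ x, ∑ x', (if x' = x then 0 else g x x')) := by
            conv_lhs => rw [Finset.sum_comm]
            rw [← Finset.sum_neg_distrib]
            refine Finset.sum_congr rfl fun x _ => ?_
            rw [← Finset.sum_neg_distrib]
            refine Finset.sum_congr rfl fun x' _ => ?_
            by_cases hxx : x' = x
            · subst hxx; simp
            · rw [if_neg (fun h => hxx h.symm), if_neg hxx,
                hgneg x x' (fun h => hxx h.symm)]
          have hT0 : (∑ x, ∑ x', (if x' = x then 0 else g x x')) = 0 := by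
            have h2T : (2 : ℂ) • (∑ x, ∑ x', (if x' = x then 0 else g x x')) = 0 := by
              rw [two_smul]; nth_rewrite 2 [hT]; simp
            rcases smul_eq_zero.mp h2T with h | h
            · norm_num at h
            · exact h
          rw [hT0, add_zero]
          simp only [hgdiag]
          rw [Finset.sum_const, Finset.card_univ, Fintype.card_fin,
            ← Nat.cast_smul_eq_nsmul ℂ]
  have hherm : star S = S := by
    rw [hS]
    rw [star_sum]
    refine Finset.sum_congr rfl fun x _ => ?_
    rw [star_smul, Matrix.star_eq_conjTranspose, (hA x).eq]
    congr 1
    simp [Complex.star_def, Complex.conj_ofReal]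
  set T := Matrix.toEuclideanCLM (𝕜 := ℂ) S with hTdef
  have hstT : star T = T := by rw [hTdef, ← StarHomClass.map_star, hherm]
  have hTT : T * T = (N : ℂ) • 1 := by
    rw [hTdef, ← _root_.map_mul, hSS, _root_.map_smul, _root_.map_one]
  have hnorm1 : ‖(1 : EuclideanSpace ℂ (Fin m) →L[ℂ] EuclideanSpace ℂ (Fin m))‖ = 1 := by
    rw [ContinuousLinearMap.one_def]; exact ContinuousLinearMap.norm_id
  have h3 : ‖T‖ * ‖T‖ = (N : ℝ) := by
    calc ‖T‖ * ‖T‖ = ‖star T * T‖ := CStarRing.norm_star_mul_self.symm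
      _ = ‖(N : ℂ) • (1 : EuclideanSpace ℂ (Fin m) →L[ℂ] EuclideanSpace ℂ (Fin m))‖ := by
          rw [hstT, hTT]
      _ = (N : ℝ) := by
          have hns := norm_smul ((N : ℕ) : ℂ)
            (1 : EuclideanSpace ℂ (Fin m) →L[ℂ] EuclideanSpace ℂ (Fin m))
          rw [hns, hnorm1, mul_one, Complex.norm_natCast]
  rw [← h3, Real.sqrt_mul_self (norm_nonneg _)]
end Aux


open Matrix ComplexOrder
open scoped Kronecker

/-- With `ε y` ranging over the `2^(N-1)` sign vectors with first entry
`+1`, self-adjoint `A x` on `H_A`, self-adjoint `B y` on `H_B` with `‖B y‖ ≤ 1`, and a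
density operator `ρ`, the Bell functional satisfies
`∑ y |Tr(ρ ((∑ x ε_{y,x} A x) ⊗ B y))| ≤ ∑ y ‖∑ x ε_{y,x} A x‖`; if moreover the `A x`
pairwise anticommute and `A x² = I`, the right-hand side equals `2^(N-1)·√N`. -/
theorem stmt11 (N m n : ℕ) (hN : 1 ≤ N) (hm : 0 < m)
    (ε : Fin (2 ^ (N - 1)) → Fin N → ℝ)
    (hεval : ∀ y x, ε y x = 1 ∨ ε y x = -1)
    (hεfirst : ∀ y, ε y ⟨0, hN⟩ = 1)
    (hεinj : Function.Injective ε)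
    (A : Fin N → Matrix (Fin m) (Fin m) ℂ) (hA : ∀ x, (A x).IsHermitian)
    (B : Fin (2 ^ (N - 1)) → Matrix (Fin n) (Fin n) ℂ) (hB : ∀ y, (B y).IsHermitian)
    (hBnorm : ∀ y, ‖Matrix.toEuclideanCLM (𝕜 := ℂ) (B y)‖ ≤ 1)
    (ρ : Matrix (Fin m × Fin n) (Fin m × Fin n) ℂ)
    (hρ : ρ.PosSemidef) (hρtr : ρ.trace = 1) :
    (∑ y, ‖(ρ * ((∑ x, (ε y x : ℂ) • A x) ⊗ₖ B y)).trace‖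
        ≤ ∑ y, ‖Matrix.toEuclideanCLM (𝕜 := ℂ) (∑ x, (ε y x : ℂ) • A x)‖) ∧
    ((∀ x, A x * A x = 1) →
      (∀ x x', x ≠ x' → A x * A x' + A x' * A x = 0) →
      ∑ y, ‖Matrix.toEuclideanCLM (𝕜 := ℂ) (∑ x, (ε y x : ℂ) • A x)‖
        = 2 ^ (N - 1) * Real.sqrt N) := by
  constructor
  · refine Finset.sum_le_sum fun y _ => ?_
    calc ‖(ρ * ((∑ x, (ε y x : ℂ) • A x) ⊗ₖ B y)).trace‖
        ≤ ‖Matrix.toEuclideanCLM (𝕜 := ℂ) ((∑ x, (ε y x : ℂ) • A x) ⊗ₖ B y)‖ :=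
          abs_trace_mul_le _ _ hρ hρtr
      _ ≤ ‖Matrix.toEuclideanCLM (𝕜 := ℂ) (∑ x, (ε y x : ℂ) • A x)‖
            * ‖Matrix.toEuclideanCLM (𝕜 := ℂ) (B y)‖ := kron_norm_le _ _
      _ ≤ ‖Matrix.toEuclideanCLM (𝕜 := ℂ) (∑ x, (ε y x : ℂ) • A x)‖ * 1 :=
          mul_le_mul_of_nonneg_left (hBnorm y) (norm_nonneg _)
      _ = _ := mul_one _
  · intro hsq hanti
    have hy : ∀ y, ‖Matrix.toEuclideanCLM (𝕜 := ℂ) (∑ x, (ε y x : ℂ) • A x)‖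
        = Real.sqrt N := fun y => norm_sum_eq hm (ε y) (hεval y) A hA hsq hanti
    simp only [hy]
    rw [Finset.sum_const, Finset.card_univ, Fintype.card_fin, nsmul_eq_mul]
    push_cast
    ring
end

section
/- There exist a two-qubit density operator ρ, self-adjoint involutions A_1, A_2, A_3 (the Pauli matrices) and self-adjoint involutions B_1, B_2, B_3, B_4 on ℂ² such that |Tr(ρ (A_1+A_2+A_3)⊗B_1)| + |Tr(ρ (A_1−A_2+A_3)⊗B_2)| + |Tr(ρ (A_1+A_2−A_3)⊗B_3)| + |Tr(ρ (A_1−A_2−A_3)⊗B_4)| = 4√3. Explicitly, one may take ρ the singlet state, A_x = σ_x, and B_y = −(ε_{y,1}σ_1 + ε_{y,2}σ_2 + ε_{y,3}σ_3)/√3 with ε_y the corresponding sign vector. -/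
open Matrix ComplexOrder
open scoped Kronecker

noncomputable section

namespace Stmt13

def s : ℂ := (Real.sqrt 3 : ℝ)

lemma s_mul_s : s * s = 3 := by
  simp only [s, ← Complex.ofReal_mul, Real.mul_self_sqrt (by norm_num : (3:ℝ) ≥ 0 |>.le)]
  norm_num

lemma s_ne_zero : s ≠ 0 := by
  simp [s, Real.sqrt_eq_zero']

lemma conj_s : (starRingEnd ℂ) s = s := Complex.conj_ofReal _

def t : ℂ := (Real.sqrt 2 : ℝ)

lemma t_mul_t : t * t = 2 := by
  simp only [t, ← Complex.ofReal_mul, Real.mul_self_sqrt (by norm_num : (0:ℝ) ≤ 2)]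
  norm_num

def Amat : Fin 3 → Matrix (Fin 2) (Fin 2) ℂ
  | 0 => !![0, 1; 1, 0]
  | 1 => !![0, -Complex.I; Complex.I, 0]
  | 2 => !![1, 0; 0, -1]

def Bmat (e1 e2 e3 : ℂ) : Matrix (Fin 2) (Fin 2) ℂ :=
  (-(1/s)) • !![e3, e1 - e2 * Complex.I; e1 + e2 * Complex.I, -e3]

def m : Matrix (Fin 1) (Fin 2 × Fin 2) ℂ :=
  Matrix.of fun _ p => t⁻¹ * !![(0:ℂ), 1; -1, 0] p.1 p.2

def ρ : Matrix (Fin 2 × Fin 2) (Fin 2 × Fin 2) ℂ := mᴴ * m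

lemma ρ_psd : ρ.PosSemidef := posSemidef_conjTranspose_mul_self m

lemma ρ_trace : ρ.trace = 1 := by
  have h2 := t_mul_t
  have ht : t ≠ 0 := by intro h; rw [h] at h2; simp at h2
  have hc : (starRingEnd ℂ) t = t := Complex.conj_ofReal _
  simp [ρ, m, Matrix.trace, Matrix.mul_apply, Fintype.sum_prod_type, Fin.sum_univ_two,
    Fin.sum_univ_one, Matrix.conjTranspose_apply, hc]
  field_simp
  linear_combination -h2

lemma Bmat_herm (e1 e2 e3 : ℂ) (h1 : (starRingEnd ℂ) e1 = e1)
    (h2 : (starRingEnd ℂ) e2 = e2) (h3 : (starRingEnd ℂ) e3 = e3) :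
    (Bmat e1 e2 e3).IsHermitian := by
  ext i j
  fin_cases i <;> fin_cases j
  all_goals simp [Bmat, Matrix.conjTranspose_apply, conj_s, Complex.conj_ofReal, map_div₀, h1, h2, h3]
  all_goals (first | exact Or.inl trivial | tauto | ring1)

lemma Bmat_inv (e1 e2 e3 : ℂ) (h : e1 * e1 + e2 * e2 + e3 * e3 = 3) :
    Bmat e1 e2 e3 * Bmat e1 e2 e3 = 1 := by
  have hs := s_mul_s
  have hs0 := s_ne_zero
  ext i j
  fin_cases i <;> fin_cases j
  all_goals simp [Bmat, Matrix.mul_apply, Fin.sum_univ_two, Matrix.one_apply]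
  all_goals field_simp
  all_goals (first | ring1 | linear_combination h - e2^2 * Complex.I_sq - hs)
lemma Amat_props : ∀ x, (Amat x).IsHermitian ∧ Amat x * Amat x = 1 := by
  intro x
  fin_cases x <;> constructor <;>
    · ext i j
      fin_cases i <;> fin_cases j <;>
        simp [Amat, Matrix.conjTranspose_apply, Matrix.mul_apply, Fin.sum_univ_two,
          Matrix.one_apply, Complex.I_mul_I]

lemma trace_rho_kron (C D : Matrix (Fin 2) (Fin 2) ℂ) :
    (ρ * (C ⊗ₖ D)).trace
      = (C 0 0 * D 1 1 + C 1 1 * D 0 0 - C 0 1 * D 1 0 - C 1 0 * D 0 1) / 2 := by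
  have h2 := t_mul_t
  have ht : t ≠ 0 := by intro h; rw [h] at h2; simp at h2
  have hc : (starRingEnd ℂ) t = t := Complex.conj_ofReal _
  simp [ρ, m, Matrix.trace, Matrix.mul_apply, Fintype.sum_prod_type, Fin.sum_univ_two,
    Fin.sum_univ_one, Matrix.conjTranspose_apply, hc, Matrix.kroneckerMap_apply]
  field_simp
  ring_nf
  linear_combination (-(C 0 0 * D 1 1 + C 1 1 * D 0 0 - C 0 1 * D 1 0 - C 1 0 * D 0 1)) * h2

lemma trace_term (e1 e2 e3 : ℂ) (h : e1 * e1 + e2 * e2 + e3 * e3 = 3) :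
    (ρ * ((e1 • Amat 0 + e2 • Amat 1 + e3 • Amat 2) ⊗ₖ Bmat e1 e2 e3)).trace = s := by
  have hs := s_mul_s
  have hs0 := s_ne_zero
  rw [trace_rho_kron]
  simp [Amat, Bmat]
  field_simp
  linear_combination 2*h - 2*(e2*e2) * Complex.I_sq - 2*hs

lemma abs_s : ‖s‖ = Real.sqrt 3 := by
  rw [show s = ((Real.sqrt 3 : ℝ) : ℂ) from rfl, Complex.norm_real, Real.norm_eq_abs]
  exact abs_of_nonneg (Real.sqrt_nonneg _)

end Stmt13



end

/-- There exist a two-qubit density operator `ρ`, self-adjoint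
involutions `A₁, A₂, A₃` and self-adjoint involutions `B₁, B₂, B₃, B₄` on `ℂ²` such
that the `N = 3` Bell/compatibility functional reaches the value `4√3`. -/
theorem stmt13 :
    ∃ (ρ : Matrix (Fin 2 × Fin 2) (Fin 2 × Fin 2) ℂ)
      (A : Fin 3 → Matrix (Fin 2) (Fin 2) ℂ)
      (B : Fin 4 → Matrix (Fin 2) (Fin 2) ℂ),
      ρ.PosSemidef ∧ ρ.trace = 1 ∧
      (∀ x, (A x).IsHermitian ∧ A x * A x = 1) ∧
      (∀ y, (B y).IsHermitian ∧ B y * B y = 1) ∧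
      ‖(ρ * ((A 0 + A 1 + A 2) ⊗ₖ B 0)).trace‖ +
        ‖(ρ * ((A 0 - A 1 + A 2) ⊗ₖ B 1)).trace‖ +
        ‖(ρ * ((A 0 + A 1 - A 2) ⊗ₖ B 2)).trace‖ +
        ‖(ρ * ((A 0 - A 1 - A 2) ⊗ₖ B 3)).trace‖
      = 4 * Real.sqrt 3 := by
  refine ⟨Stmt13.ρ, Stmt13.Amat,
    ![Stmt13.Bmat 1 1 1, Stmt13.Bmat 1 (-1) 1, Stmt13.Bmat 1 1 (-1), Stmt13.Bmat 1 (-1) (-1)],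
    Stmt13.ρ_psd, Stmt13.ρ_trace, Stmt13.Amat_props, ?_, ?_⟩
  · intro y
    fin_cases y <;>
      exact ⟨Stmt13.Bmat_herm _ _ _ (by simp) (by simp) (by simp),
        Stmt13.Bmat_inv _ _ _ (by norm_num)⟩
  · have r1 : Stmt13.Amat 0 + Stmt13.Amat 1 + Stmt13.Amat 2
        = (1:ℂ) • Stmt13.Amat 0 + (1:ℂ) • Stmt13.Amat 1 + (1:ℂ) • Stmt13.Amat 2 := by
      module
    have r2 : Stmt13.Amat 0 - Stmt13.Amat 1 + Stmt13.Amat 2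
        = (1:ℂ) • Stmt13.Amat 0 + (-1:ℂ) • Stmt13.Amat 1 + (1:ℂ) • Stmt13.Amat 2 := by
      module
    have r3 : Stmt13.Amat 0 + Stmt13.Amat 1 - Stmt13.Amat 2
        = (1:ℂ) • Stmt13.Amat 0 + (1:ℂ) • Stmt13.Amat 1 + (-1:ℂ) • Stmt13.Amat 2 := by
      module
    have r4 : Stmt13.Amat 0 - Stmt13.Amat 1 - Stmt13.Amat 2
        = (1:ℂ) • Stmt13.Amat 0 + (-1:ℂ) • Stmt13.Amat 1 + (-1:ℂ) • Stmt13.Amat 2 := by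
      module
    simp only [Matrix.cons_val_zero, Matrix.cons_val_one, Matrix.head_cons,
      Matrix.cons_val_two, Matrix.tail_cons, Matrix.cons_val_three]
    rw [r1, r2, r3, r4,
      Stmt13.trace_term 1 1 1 (by norm_num),
      Stmt13.trace_term 1 (-1) 1 (by norm_num),
      Stmt13.trace_term 1 1 (-1) (by norm_num),
      Stmt13.trace_term 1 (-1) (-1) (by norm_num),
      Stmt13.abs_s]
    ring
end
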